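/- arXiv:2004.13135 — 4 statements merged into one kernel-verified Lean document; each statement's English description precedes it below -/
import Mathlib

section
/- Let χ(μ) = Ψ_λ(ρ_κ(ζ)) where μ = (κ, λ), λ = (C, d) ranges over {λ : ‖λ‖ < D} and Ψ_λ(x) = ψ(Cx + d). Assume κ ↦ ρ_κ(ζ) is Lipschitz with constant L₁ and ‖ρ_κ(ζ)‖ ≤ B₁ for all κ. Then the partial gradient of χ with respect to λ = (C, d) is Lipschitz in μ with constant √m₁, where m₁ = max{ 3L₁²(c₁²n₃ + c₂²D²B₁²) + 2c₂²D²L₁² , c₂²(B₁² + 1)(3B₁² + 2) }; i.e., ‖(∂/∂λ)χ(μ) − (∂/∂λ)χ(μ̄)‖² ≤ m₁‖μ − μ̄‖² for all admissible μ, μ̄. -/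
open scoped BigOperators

/-- Frobenius-type norm of a vector. -/
noncomputable def vnorm {n : ℕ} (v : Fin n → ℝ) : ℝ := Real.sqrt (∑ i, (v i) ^ 2)

/-- Frobenius-type norm of a matrix. -/
noncomputable def mnorm {m n : ℕ} (A : Fin m → Fin n → ℝ) : ℝ :=
  Real.sqrt (∑ i, ∑ j, (A i j) ^ 2)

/-- Pre-activation of the layer: C_{i,·}·ρ_κ(ζ) + d_i. -/
noncomputable def preact {n₁ n₂ n₃ l₁ : ℕ}
    (ρ : (Fin l₁ → ℝ) → (Fin n₁ → ℝ) → Fin n₂ → ℝ) (ζ : Fin n₁ → ℝ)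
    (κ : Fin l₁ → ℝ) (C : Fin n₃ → Fin n₂ → ℝ) (d : Fin n₃ → ℝ) (i : Fin n₃) : ℝ :=
  ∑ j, C i j * ρ κ ζ j + d i

/-- Partial derivative (∂/∂C_{ij})χ(μ) = ψ̃′(C_{i,·}ρ_κ(ζ) + d_i)·(ρ_κ(ζ))_j·e_i,
indexed by output component `k` and parameter indices `i j`. -/
noncomputable def gradChiC {n₁ n₂ n₃ l₁ : ℕ} (ψ : ℝ → ℝ)
    (ρ : (Fin l₁ → ℝ) → (Fin n₁ → ℝ) → Fin n₂ → ℝ) (ζ : Fin n₁ → ℝ)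
    (κ : Fin l₁ → ℝ) (C : Fin n₃ → Fin n₂ → ℝ) (d : Fin n₃ → ℝ) :
    Fin n₃ → Fin n₃ → Fin n₂ → ℝ :=
  fun k i j => if k = i then deriv ψ (preact ρ ζ κ C d i) * ρ κ ζ j else 0

/-- Partial derivative (∂/∂d_i)χ(μ) = ψ̃′(C_{i,·}ρ_κ(ζ) + d_i)·e_i,
indexed by output component `k` and parameter index `i`. -/
noncomputable def gradChiD {n₁ n₂ n₃ l₁ : ℕ} (ψ : ℝ → ℝ)
    (ρ : (Fin l₁ → ℝ) → (Fin n₁ → ℝ) → Fin n₂ → ℝ) (ζ : Fin n₁ → ℝ)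
    (κ : Fin l₁ → ℝ) (C : Fin n₃ → Fin n₂ → ℝ) (d : Fin n₃ → ℝ) :
    Fin n₃ → Fin n₃ → ℝ :=
  fun k i => if k = i then deriv ψ (preact ρ ζ κ C d i) else 0

lemma aux_three (u v w t B : ℝ) (ht : 0 ≤ t) (hv : v^2 ≤ t * B^2) :
    (u+v+w)^2 ≤ 2*u^2 + 2*(B^2+1)*t + 2*(B^2+1)*w^2 := by
  rcases eq_or_ne B 0 with hB | hB
  · subst hB
    have hv0 : v = 0 := by nlinarith [sq_nonneg v]
    subst hv0
    nlinarith [sq_nonneg (u - w)]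
  · have hB2 : 0 < B^2 := by positivity
    nlinarith [mul_nonneg hB2.le (sq_nonneg (u - v - w)), sq_nonneg (B^2*w - v),
      mul_nonneg (by positivity : (0:ℝ) ≤ B^2+1) (sub_nonneg.2 hv), hB2]

set_option maxHeartbeats 1000000 in
/-- the partial gradient of χ with respect to λ = (C, d) is Lipschitz in μ with
constant √m₁: ‖(∂/∂λ)χ(μ) − (∂/∂λ)χ(μ̄)‖² ≤ m₁‖μ − μ̄‖². -/
theorem statement1 {n₁ n₂ n₃ l₁ : ℕ} (ψ : ℝ → ℝ) (c₁ c₂ : ℝ)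
    (hψ : Differentiable ℝ ψ) (hψ' : Differentiable ℝ (deriv ψ))
    (hc₁ : ∀ x, |deriv ψ x| ≤ c₁) (hc₂ : ∀ x, |deriv (deriv ψ) x| ≤ c₂)
    (𝒦 : Set (Fin l₁ → ℝ))
    (ρ : (Fin l₁ → ℝ) → (Fin n₁ → ℝ) → Fin n₂ → ℝ) (ζ : Fin n₁ → ℝ)
    (D L₁ B₁ : ℝ)
    (hρLip : ∀ κ ∈ 𝒦, ∀ κ' ∈ 𝒦, vnorm (ρ κ ζ - ρ κ' ζ) ≤ L₁ * vnorm (κ - κ'))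
    (hρB : ∀ κ ∈ 𝒦, vnorm (ρ κ ζ) ≤ B₁) :
    ∀ κ ∈ 𝒦, ∀ κ' ∈ 𝒦, ∀ (C C' : Fin n₃ → Fin n₂ → ℝ) (d d' : Fin n₃ → ℝ),
      Real.sqrt ((mnorm C) ^ 2 + (vnorm d) ^ 2) < D →
      Real.sqrt ((mnorm C') ^ 2 + (vnorm d') ^ 2) < D →
      (∑ k, ∑ i, ∑ j, (gradChiC ψ ρ ζ κ C d k i j - gradChiC ψ ρ ζ κ' C' d' k i j) ^ 2) +
        (∑ k, ∑ i, (gradChiD ψ ρ ζ κ C d k i - gradChiD ψ ρ ζ κ' C' d' k i) ^ 2)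
        ≤ (max (3 * L₁ ^ 2 * (c₁ ^ 2 * (n₃ : ℝ) + c₂ ^ 2 * D ^ 2 * B₁ ^ 2)
                  + 2 * c₂ ^ 2 * D ^ 2 * L₁ ^ 2)
               (c₂ ^ 2 * (B₁ ^ 2 + 1) * (3 * B₁ ^ 2 + 2))) *
          ((vnorm (κ - κ')) ^ 2 + (mnorm (C - C')) ^ 2 + (vnorm (d - d')) ^ 2) := by
  intro κ hκ κ' hκ' C C' d d' hDC hDC'
  have hc₁0 : 0 ≤ c₁ := (abs_nonneg _).trans (hc₁ 0)
  have hc₂0 : 0 ≤ c₂ := (abs_nonneg _).trans (hc₂ 0)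
  have hB₁0 : 0 ≤ B₁ := (Real.sqrt_nonneg _).trans (hρB κ hκ)
  have hD0 : 0 ≤ D := (Real.sqrt_nonneg _).trans hDC.le
  -- ‖C‖² ≤ D²
  have hCD : ∑ i, ∑ j, (C i j)^2 ≤ D^2 := by
    have h1 : (mnorm C)^2 + (vnorm d)^2 < D^2 := by
      calc (mnorm C)^2 + (vnorm d)^2
          = (Real.sqrt ((mnorm C)^2 + (vnorm d)^2))^2 :=
            (Real.sq_sqrt (by positivity)).symm
        _ < D^2 := by
            apply pow_lt_pow_left₀ hDC (Real.sqrt_nonneg _)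
            norm_num
    have h2 : (mnorm C)^2 = ∑ i, ∑ j, (C i j)^2 := by
      simp only [mnorm]
      exact Real.sq_sqrt (by positivity)
    nlinarith [sq_nonneg (vnorm d)]
  -- derivative bounds
  have hgb : ∀ x, (deriv ψ x)^2 ≤ c₁^2 := by
    intro x
    nlinarith [hc₁ x, abs_nonneg (deriv ψ x), sq_abs (deriv ψ x)]
  have hlip : ∀ x y, (deriv ψ x - deriv ψ y)^2 ≤ c₂^2 * (x - y)^2 := by
    intro x y
    have h := Convex.norm_image_sub_le_of_norm_deriv_le (f := deriv ψ) (C := c₂)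
      (fun z _ => hψ' z) (fun z _ => by simpa using hc₂ z) convex_univ
      (Set.mem_univ y) (Set.mem_univ x)
    rw [Real.norm_eq_abs, Real.norm_eq_abs] at h
    nlinarith [abs_nonneg (deriv ψ x - deriv ψ y), sq_abs (deriv ψ x - deriv ψ y),
      sq_abs (x - y), abs_nonneg (x - y), mul_nonneg hc₂0 (abs_nonneg (x - y))]
  -- squared Lipschitz/bound facts for ρ
  have hSκ : ∑ j, (ρ κ ζ j - ρ κ' ζ j)^2 ≤ L₁^2 * ∑ i, (κ i - κ' i)^2 := by
    have h := hρLip κ hκ κ' hκ'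
    have h1 : vnorm (ρ κ ζ - ρ κ' ζ) = Real.sqrt (∑ j, (ρ κ ζ j - ρ κ' ζ j)^2) := by
      simp [vnorm]
    have h2 : vnorm (κ - κ') = Real.sqrt (∑ i, (κ i - κ' i)^2) := by simp [vnorm]
    rw [h1, h2] at h
    calc ∑ j, (ρ κ ζ j - ρ κ' ζ j)^2
        = (Real.sqrt (∑ j, (ρ κ ζ j - ρ κ' ζ j)^2))^2 := (Real.sq_sqrt (by positivity)).symm
      _ ≤ (L₁ * Real.sqrt (∑ i, (κ i - κ' i)^2))^2 :=
          pow_le_pow_left₀ (Real.sqrt_nonneg _) h 2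
      _ = L₁^2 * ∑ i, (κ i - κ' i)^2 := by
          rw [mul_pow, Real.sq_sqrt (by positivity)]
  have hR2 : ∑ j, (ρ κ' ζ j)^2 ≤ B₁^2 := by
    have h := hρB κ' hκ'
    have h1 : vnorm (ρ κ' ζ) = Real.sqrt (∑ j, (ρ κ' ζ j)^2) := by simp [vnorm]
    rw [h1] at h
    calc ∑ j, (ρ κ' ζ j)^2
        = (Real.sqrt (∑ j, (ρ κ' ζ j)^2))^2 := (Real.sq_sqrt (by positivity)).symm
      _ ≤ B₁^2 := pow_le_pow_left₀ (Real.sqrt_nonneg _) h 2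
  -- collapse the diagonal sums
  have collapse1 : (∑ k, ∑ i, ∑ j,
        (gradChiC ψ ρ ζ κ C d k i j - gradChiC ψ ρ ζ κ' C' d' k i j) ^ 2)
      = ∑ i, ∑ j, (deriv ψ (preact ρ ζ κ C d i) * ρ κ ζ j
          - deriv ψ (preact ρ ζ κ' C' d' i) * ρ κ' ζ j)^2 := by
    refine Finset.sum_congr rfl fun k _ => ?_
    rw [Finset.sum_eq_single_of_mem k (Finset.mem_univ k)
      (fun i _ hik => by simp [gradChiC, Ne.symm hik])]
    simp [gradChiC]
  have collapse2 : (∑ k, ∑ i,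
        (gradChiD ψ ρ ζ κ C d k i - gradChiD ψ ρ ζ κ' C' d' k i) ^ 2)
      = ∑ i, (deriv ψ (preact ρ ζ κ C d i) - deriv ψ (preact ρ ζ κ' C' d' i))^2 := by
    refine Finset.sum_congr rfl fun k _ => ?_
    rw [Finset.sum_eq_single_of_mem k (Finset.mem_univ k)
      (fun i _ hik => by simp [gradChiD, Ne.symm hik])]
    simp [gradChiD]
  -- decomposition of preact differences
  have key : ∀ i, preact ρ ζ κ C d i - preact ρ ζ κ' C' d' i
      = (∑ j, C i j * (ρ κ ζ j - ρ κ' ζ j))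
        + (∑ j, (C i j - C' i j) * ρ κ' ζ j) + (d i - d' i) := by
    intro i
    have h : (∑ j, C i j * (ρ κ ζ j - ρ κ' ζ j)) + (∑ j, (C i j - C' i j) * ρ κ' ζ j)
        = (∑ j, C i j * ρ κ ζ j) - ∑ j, C' i j * ρ κ' ζ j := by
      rw [← Finset.sum_add_distrib, ← Finset.sum_sub_distrib]
      exact Finset.sum_congr rfl fun j _ => by ring
    simp only [preact]
    rw [h]  -- ?
    ring
  -- Cauchy–Schwarz bounds
  have hu : ∑ i, (∑ j, C i j * (ρ κ ζ j - ρ κ' ζ j))^2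
      ≤ (∑ i, ∑ j, (C i j)^2) * ∑ j, (ρ κ ζ j - ρ κ' ζ j)^2 := by
    rw [Finset.sum_mul]
    exact Finset.sum_le_sum fun i _ => Finset.sum_mul_sq_le_sq_mul_sq _ _ _
  have hv : ∀ i, (∑ j, (C i j - C' i j) * ρ κ' ζ j)^2
      ≤ (∑ j, (C i j - C' i j)^2) * B₁^2 :=
    fun i => le_trans (Finset.sum_mul_sq_le_sq_mul_sq _ _ _)
      (mul_le_mul_of_nonneg_left hR2 (by positivity))
  -- bound on P = Σ (a i - a' i)²
  have hP : ∑ i, (preact ρ ζ κ C d i - preact ρ ζ κ' C' d' i)^2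
      ≤ 2*(D^2*(L₁^2 * ∑ i, (κ i - κ' i)^2))
        + 2*(B₁^2+1)*(∑ i, ∑ j, (C i j - C' i j)^2)
        + 2*(B₁^2+1)*(∑ i, (d i - d' i)^2) := by
    calc ∑ i, (preact ρ ζ κ C d i - preact ρ ζ κ' C' d' i)^2
        = ∑ i, ((∑ j, C i j * (ρ κ ζ j - ρ κ' ζ j))
            + (∑ j, (C i j - C' i j) * ρ κ' ζ j) + (d i - d' i))^2 :=
          Finset.sum_congr rfl fun i _ => by rw [key i]
      _ ≤ ∑ i, (2*(∑ j, C i j * (ρ κ ζ j - ρ κ' ζ j))^2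
            + 2*(B₁^2+1)*(∑ j, (C i j - C' i j)^2)
            + 2*(B₁^2+1)*(d i - d' i)^2) :=
          Finset.sum_le_sum fun i _ =>
            aux_three _ _ _ _ _ (by positivity) (hv i)
      _ = 2*(∑ i, (∑ j, C i j * (ρ κ ζ j - ρ κ' ζ j))^2)
            + 2*(B₁^2+1)*(∑ i, ∑ j, (C i j - C' i j)^2)
            + 2*(B₁^2+1)*(∑ i, (d i - d' i)^2) := by
          simp [Finset.sum_add_distrib, Finset.mul_sum]
      _ ≤ _ := by
          have h1 : (∑ i, (∑ j, C i j * (ρ κ ζ j - ρ κ' ζ j))^2)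
              ≤ D^2*(L₁^2 * ∑ i, (κ i - κ' i)^2) :=
            le_trans hu (mul_le_mul hCD hSκ (by positivity) (by positivity))
          linarith
  -- Q ≤ c₂² P
  have hQ : ∑ i, (deriv ψ (preact ρ ζ κ C d i) - deriv ψ (preact ρ ζ κ' C' d' i))^2
      ≤ c₂^2 * ∑ i, (preact ρ ζ κ C d i - preact ρ ζ κ' C' d' i)^2 := by
    rw [Finset.mul_sum]
    exact Finset.sum_le_sum fun i _ => hlip _ _
  -- bound on F
  have hF : (∑ i, ∑ j, (deriv ψ (preact ρ ζ κ C d i) * ρ κ ζ j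
        - deriv ψ (preact ρ ζ κ' C' d' i) * ρ κ' ζ j)^2)
      ≤ 3*c₁^2*(n₃:ℝ)*(∑ j, (ρ κ ζ j - ρ κ' ζ j)^2)
        + 3/2*B₁^2*(∑ i, (deriv ψ (preact ρ ζ κ C d i)
            - deriv ψ (preact ρ ζ κ' C' d' i))^2) := by
    have hper : ∀ i, (∑ j, (deriv ψ (preact ρ ζ κ C d i) * ρ κ ζ j
          - deriv ψ (preact ρ ζ κ' C' d' i) * ρ κ' ζ j)^2)
        ≤ (3*c₁^2)*(∑ j, (ρ κ ζ j - ρ κ' ζ j)^2)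
          + (3/2*B₁^2)*((deriv ψ (preact ρ ζ κ C d i)
              - deriv ψ (preact ρ ζ κ' C' d' i))^2) := by
      intro i
      set X := deriv ψ (preact ρ ζ κ C d i) with hX
      set Y := deriv ψ (preact ρ ζ κ' C' d' i) with hY
      calc (∑ j, (X * ρ κ ζ j - Y * ρ κ' ζ j)^2)
          ≤ ∑ j, ((3*X^2)*((ρ κ ζ j - ρ κ' ζ j)^2) + (3/2*(X - Y)^2)*((ρ κ' ζ j)^2)) :=
            Finset.sum_le_sum fun j _ => by
              nlinarith [sq_nonneg (2*(X*(ρ κ ζ j - ρ κ' ζ j)) - (X - Y)*(ρ κ' ζ j))]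
        _ = (3*X^2)*(∑ j, (ρ κ ζ j - ρ κ' ζ j)^2)
            + (3/2*(X - Y)^2)*(∑ j, (ρ κ' ζ j)^2) := by
            simp [Finset.sum_add_distrib, Finset.mul_sum]
        _ ≤ (3*c₁^2)*(∑ j, (ρ κ ζ j - ρ κ' ζ j)^2) + (3/2*B₁^2)*((X - Y)^2) := by
            have h1 := mul_le_mul_of_nonneg_right (hgb (preact ρ ζ κ C d i))
              (show (0:ℝ) ≤ ∑ j, (ρ κ ζ j - ρ κ' ζ j)^2 by positivity)
            have h2 := mul_le_mul_of_nonneg_left hR2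
              (show (0:ℝ) ≤ 3/2*(X - Y)^2 by positivity)
            rw [← hX] at h1
            nlinarith [h1, h2]
    calc (∑ i, ∑ j, (deriv ψ (preact ρ ζ κ C d i) * ρ κ ζ j
          - deriv ψ (preact ρ ζ κ' C' d' i) * ρ κ' ζ j)^2)
        ≤ ∑ i : Fin n₃, ((3*c₁^2)*(∑ j, (ρ κ ζ j - ρ κ' ζ j)^2)
            + (3/2*B₁^2)*((deriv ψ (preact ρ ζ κ C d i)
                - deriv ψ (preact ρ ζ κ' C' d' i))^2)) :=
          Finset.sum_le_sum fun i _ => hper i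
      _ = _ := by
          rw [Finset.sum_add_distrib, Finset.sum_const, Finset.card_univ,
            Fintype.card_fin, nsmul_eq_mul, ← Finset.mul_sum]
          ring
  -- rewrite the right-hand side norms
  have r1 : (vnorm (κ - κ'))^2 = ∑ i, (κ i - κ' i)^2 := by
    simp only [vnorm, Pi.sub_apply]
    exact Real.sq_sqrt (by positivity)
  have r2 : (mnorm (C - C'))^2 = ∑ i, ∑ j, (C i j - C' i j)^2 := by
    simp only [mnorm, Pi.sub_apply]
    exact Real.sq_sqrt (by positivity)
  have r3 : (vnorm (d - d'))^2 = ∑ i, (d i - d' i)^2 := by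
    simp only [vnorm, Pi.sub_apply]
    exact Real.sq_sqrt (by positivity)
  rw [collapse1, collapse2, r1, r2, r3]
  -- final assembly
  set M₁ := 3 * L₁ ^ 2 * (c₁ ^ 2 * (n₃ : ℝ) + c₂ ^ 2 * D ^ 2 * B₁ ^ 2)
      + 2 * c₂ ^ 2 * D ^ 2 * L₁ ^ 2 with hM₁
  set M₂ := c₂ ^ 2 * (B₁ ^ 2 + 1) * (3 * B₁ ^ 2 + 2) with hM₂
  have hSnn : (0:ℝ) ≤ ∑ i, (κ i - κ' i)^2 := by positivity
  have hTnn : (0:ℝ) ≤ ∑ i, ∑ j, (C i j - C' i j)^2 := by positivity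
  have hUnn : (0:ℝ) ≤ ∑ i, (d i - d' i)^2 := by positivity
  have e1 := mul_le_mul_of_nonneg_left hSκ
    (show (0:ℝ) ≤ 3*c₁^2*(n₃:ℝ) by positivity)
  have e2 : (∑ i, (deriv ψ (preact ρ ζ κ C d i) - deriv ψ (preact ρ ζ κ' C' d' i))^2)
      ≤ c₂^2 * (2*(D^2*(L₁^2 * ∑ i, (κ i - κ' i)^2))
        + 2*(B₁^2+1)*(∑ i, ∑ j, (C i j - C' i j)^2)
        + 2*(B₁^2+1)*(∑ i, (d i - d' i)^2)) :=
    le_trans hQ (mul_le_mul_of_nonneg_left hP (by positivity))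
  have e3 := mul_le_mul_of_nonneg_left e2
    (show (0:ℝ) ≤ (3*B₁^2+2)/2 by positivity)
  have hm1 : M₁ * (∑ i, (κ i - κ' i)^2) ≤ (max M₁ M₂) * (∑ i, (κ i - κ' i)^2) :=
    mul_le_mul_of_nonneg_right (le_max_left _ _) hSnn
  have hm2 : M₂ * ((∑ i, ∑ j, (C i j - C' i j)^2) + ∑ i, (d i - d' i)^2)
      ≤ (max M₁ M₂) * ((∑ i, ∑ j, (C i j - C' i j)^2) + ∑ i, (d i - d' i)^2) :=
    mul_le_mul_of_nonneg_right (le_max_right _ _) (by positivity)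
  rw [hM₁] at hm1
  rw [hM₂] at hm2
  nlinarith [hF, e1, e3, hm1, hm2]
end

section
/- Let Ψ′_λ(x) = diag(ψ′(Cx + d))·C be the Jacobian of Ψ_λ(x) = ψ(Cx + d) with respect to x, where λ = (C, d) ranges over {λ : ‖λ‖ < D}. Assume κ ↦ ρ_κ(ζ) is Lipschitz with constant L₁ and ‖ρ_κ(ζ)‖ ≤ B₁ for all κ. Then for all admissible (κ, λ) and (κ̄, λ̄): ‖Ψ′_λ(ρ_κ(ζ)) − Ψ′_{λ̄}(ρ_{κ̄}(ζ))‖ ≤ (n₃c₁ + D·c₂·√(B₁² + 1))·‖λ − λ̄‖ + c₂D²L₁·‖κ − κ̄‖. -/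
open scoped BigOperators

/-- The Jacobian Ψ′_λ(ρ_κ(ζ)) = diag(ψ′(C ρ_κ(ζ) + d))·C of Ψ_λ(x) = ψ(Cx + d) in x,
evaluated at x = ρ_κ(ζ). -/
noncomputable def PsiJac {n₁ n₂ n₃ l₁ : ℕ} (ψ : ℝ → ℝ)
    (ρ : (Fin l₁ → ℝ) → (Fin n₁ → ℝ) → Fin n₂ → ℝ) (ζ : Fin n₁ → ℝ)
    (κ : Fin l₁ → ℝ) (C : Fin n₃ → Fin n₂ → ℝ) (d : Fin n₃ → ℝ) :
    Fin n₃ → Fin n₂ → ℝ :=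
  fun i j => deriv ψ (∑ j', C i j' * ρ κ ζ j' + d i) * C i j

lemma cs {ι : Type*} [Fintype ι] (f g : ι → ℝ) :
    ∑ i, f i * g i ≤ Real.sqrt (∑ i, f i ^ 2) * Real.sqrt (∑ i, g i ^ 2) := by
  have h := Finset.sum_mul_sq_le_sq_mul_sq Finset.univ f g
  have h2 : Real.sqrt ((∑ i, f i * g i) ^ 2) ≤
      Real.sqrt ((∑ i, f i ^ 2) * ∑ i, g i ^ 2) := Real.sqrt_le_sqrt h
  calc ∑ i, f i * g i ≤ |∑ i, f i * g i| := le_abs_self _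
    _ = Real.sqrt ((∑ i, f i * g i) ^ 2) := (Real.sqrt_sq_eq_abs _).symm
    _ ≤ Real.sqrt ((∑ i, f i ^ 2) * ∑ i, g i ^ 2) := h2
    _ = _ := Real.sqrt_mul (by positivity) _

lemma cs_abs {ι : Type*} [Fintype ι] (f g : ι → ℝ) :
    |∑ i, f i * g i| ≤ Real.sqrt (∑ i, f i ^ 2) * Real.sqrt (∑ i, g i ^ 2) := by
  rcases abs_cases (∑ i, f i * g i) with ⟨h, _⟩ | ⟨h, _⟩
  · rw [h]; exact cs f g
  · rw [h, ← Finset.sum_neg_distrib]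
    calc ∑ i, -(f i * g i) = ∑ i, (-f i) * g i := by simp [neg_mul]
      _ ≤ Real.sqrt (∑ i, (-f i) ^ 2) * Real.sqrt (∑ i, g i ^ 2) := cs _ _
      _ = _ := by simp

lemma mink {ι : Type*} [Fintype ι] (f g : ι → ℝ) :
    Real.sqrt (∑ i, (f i + g i) ^ 2) ≤
      Real.sqrt (∑ i, f i ^ 2) + Real.sqrt (∑ i, g i ^ 2) := by
  set A := Real.sqrt (∑ i, f i ^ 2) with hA
  set B := Real.sqrt (∑ i, g i ^ 2) with hB
  have hA2 : A ^ 2 = ∑ i, f i ^ 2 := Real.sq_sqrt (by positivity)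
  have hB2 : B ^ 2 = ∑ i, g i ^ 2 := Real.sq_sqrt (by positivity)
  have hcs := cs f g
  have key : ∑ i, (f i + g i) ^ 2 ≤ (A + B) ^ 2 := by
    have : ∑ i, (f i + g i) ^ 2 = (∑ i, f i ^ 2) + 2 * (∑ i, f i * g i) + ∑ i, g i ^ 2 := by
      rw [Finset.mul_sum, ← Finset.sum_add_distrib, ← Finset.sum_add_distrib]
      congr 1; ext i; ring
    rw [this]; nlinarith
  calc Real.sqrt (∑ i, (f i + g i) ^ 2) ≤ Real.sqrt ((A + B) ^ 2) := Real.sqrt_le_sqrt key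
    _ = |A + B| := Real.sqrt_sq_eq_abs _
    _ = A + B := abs_of_nonneg (by positivity)

lemma sqrt_sum_sq_mono {ι : Type*} [Fintype ι] {f g : ι → ℝ} (h : ∀ i, |f i| ≤ g i) :
    Real.sqrt (∑ i, f i ^ 2) ≤ Real.sqrt (∑ i, g i ^ 2) := by
  apply Real.sqrt_le_sqrt
  apply Finset.sum_le_sum
  intro i _
  calc f i ^ 2 = |f i| ^ 2 := (sq_abs _).symm
    _ ≤ g i ^ 2 := by have := h i; nlinarith [abs_nonneg (f i)]

lemma deriv_lip (ψ : ℝ → ℝ) (c₂ : ℝ) (hψ' : Differentiable ℝ (deriv ψ))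
    (hc₂ : ∀ x, |deriv (deriv ψ) x| ≤ c₂) (x y : ℝ) :
    |deriv ψ x - deriv ψ y| ≤ c₂ * |x - y| := by
  have := Convex.norm_image_sub_le_of_norm_deriv_le (f := deriv ψ) (s := Set.univ)
    (fun z _ => hψ' z) (fun z _ => by simpa [Real.norm_eq_abs] using hc₂ z)
    convex_univ (Set.mem_univ y) (Set.mem_univ x)
  simpa [Real.norm_eq_abs] using this

lemma mnorm_prod {m n : ℕ} (A : Fin m → Fin n → ℝ) :
    mnorm A = Real.sqrt (∑ p : Fin m × Fin n, (A p.1 p.2) ^ 2) := by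
  rw [mnorm, ← Fintype.sum_prod_type']

lemma vnorm_nonneg {n : ℕ} (v : Fin n → ℝ) : 0 ≤ vnorm v := Real.sqrt_nonneg _
lemma mnorm_nonneg {m n : ℕ} (A : Fin m → Fin n → ℝ) : 0 ≤ mnorm A := Real.sqrt_nonneg _


set_option maxHeartbeats 400000 in
set_option maxHeartbeats 2000000 in
/-- ‖Ψ′_λ(ρ_κ(ζ)) − Ψ′_{λ̄}(ρ_{κ̄}(ζ))‖ ≤
(n₃c₁ + D·c₂·√(B₁² + 1))·‖λ − λ̄‖ + c₂D²L₁·‖κ − κ̄‖. -/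
theorem statement2 {n₁ n₂ n₃ l₁ : ℕ} (ψ : ℝ → ℝ) (c₁ c₂ : ℝ)
    (hψ : Differentiable ℝ ψ) (hψ' : Differentiable ℝ (deriv ψ))
    (hc₁ : ∀ x, |deriv ψ x| ≤ c₁) (hc₂ : ∀ x, |deriv (deriv ψ) x| ≤ c₂)
    (𝒦 : Set (Fin l₁ → ℝ))
    (ρ : (Fin l₁ → ℝ) → (Fin n₁ → ℝ) → Fin n₂ → ℝ) (ζ : Fin n₁ → ℝ)
    (D L₁ B₁ : ℝ)
    (hρLip : ∀ κ ∈ 𝒦, ∀ κ' ∈ 𝒦, vnorm (ρ κ ζ - ρ κ' ζ) ≤ L₁ * vnorm (κ - κ'))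
    (hρB : ∀ κ ∈ 𝒦, vnorm (ρ κ ζ) ≤ B₁) :
    ∀ κ ∈ 𝒦, ∀ κ' ∈ 𝒦, ∀ (C C' : Fin n₃ → Fin n₂ → ℝ) (d d' : Fin n₃ → ℝ),
      Real.sqrt ((mnorm C) ^ 2 + (vnorm d) ^ 2) < D →
      Real.sqrt ((mnorm C') ^ 2 + (vnorm d') ^ 2) < D →
      mnorm (PsiJac ψ ρ ζ κ C d - PsiJac ψ ρ ζ κ' C' d')
        ≤ ((n₃ : ℝ) * c₁ + D * c₂ * Real.sqrt (B₁ ^ 2 + 1)) *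
            Real.sqrt ((mnorm (C - C')) ^ 2 + (vnorm (d - d')) ^ 2)
          + c₂ * D ^ 2 * L₁ * vnorm (κ - κ') := by
  intro κ hκ κ' hκ' C C' d d' hCd hCd'
  have hc₁0 : 0 ≤ c₁ := le_trans (abs_nonneg _) (hc₁ 0)
  have hc₂0 : 0 ≤ c₂ := le_trans (abs_nonneg _) (hc₂ 0)
  have hB₁0 : 0 ≤ B₁ := le_trans (vnorm_nonneg _) (hρB κ hκ)
  have hD0 : 0 ≤ D := le_trans (Real.sqrt_nonneg _) hCd.le
  set S := Real.sqrt ((mnorm (C - C')) ^ 2 + (vnorm (d - d')) ^ 2) with hS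
  have hS0 : 0 ≤ S := Real.sqrt_nonneg _
  set K := vnorm (κ - κ') with hK
  set P := vnorm (ρ κ ζ - ρ κ' ζ) with hP
  have hP0 : 0 ≤ P := vnorm_nonneg _
  have hPK : P ≤ L₁ * K := hρLip κ hκ κ' hκ'
  -- abbreviations
  set a : Fin n₃ → ℝ := fun i => ∑ j', C i j' * ρ κ ζ j' + d i with ha
  set b : Fin n₃ → ℝ := fun i => ∑ j', C' i j' * ρ κ' ζ j' + d' i with hb
  set F : Fin n₃ → Fin n₂ → ℝ := fun i j => deriv ψ (a i) * (C i j - C' i j) with hF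
  set G : Fin n₃ → Fin n₂ → ℝ := fun i j => (deriv ψ (a i) - deriv ψ (b i)) * C' i j with hG
  -- row norms
  set r : Fin n₃ → ℝ := fun i => Real.sqrt (∑ j, C' i j ^ 2) with hr
  set w : Fin n₃ → ℝ := fun i => Real.sqrt (∑ j, (C i j - C' i j) ^ 2) with hw
  have hr0 : ∀ i, 0 ≤ r i := fun i => Real.sqrt_nonneg _
  have hw0 : ∀ i, 0 ≤ w i := fun i => Real.sqrt_nonneg _
  have hr2 : ∀ i, r i ^ 2 = ∑ j, C' i j ^ 2 := fun i => Real.sq_sqrt (by positivity)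
  have hw2 : ∀ i, w i ^ 2 = ∑ j, (C i j - C' i j) ^ 2 := fun i => Real.sq_sqrt (by positivity)
  set M := mnorm C' with hM
  have hM0 : 0 ≤ M := mnorm_nonneg _
  have hM2 : M ^ 2 = ∑ i, ∑ j, C' i j ^ 2 := Real.sq_sqrt (by positivity)
  have hMD : M ≤ D := by
    calc M = Real.sqrt (M ^ 2) := (Real.sqrt_sq hM0).symm
      _ ≤ Real.sqrt (M ^ 2 + (vnorm d') ^ 2) :=
          Real.sqrt_le_sqrt (le_add_of_nonneg_right (sq_nonneg _))
      _ ≤ D := hCd'.le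
  have hrD : ∀ i, r i ≤ D := by
    intro i
    calc r i = Real.sqrt (∑ j, C' i j ^ 2) := rfl
      _ ≤ Real.sqrt (∑ i, ∑ j, C' i j ^ 2) := Real.sqrt_le_sqrt
          (Finset.single_le_sum (f := fun i => ∑ j, C' i j ^ 2)
            (fun i _ => by positivity) (Finset.mem_univ i))
      _ = M := rfl
      _ ≤ D := hMD
  -- step 1: split
  have hsplit : mnorm (PsiJac ψ ρ ζ κ C d - PsiJac ψ ρ ζ κ' C' d') ≤ mnorm F + mnorm G := by
    rw [mnorm_prod, mnorm_prod, mnorm_prod]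
    have hEq : ∀ p : Fin n₃ × Fin n₂,
        (PsiJac ψ ρ ζ κ C d - PsiJac ψ ρ ζ κ' C' d') p.1 p.2 = F p.1 p.2 + G p.1 p.2 := by
      intro p
      simp only [Pi.sub_apply, PsiJac, hF, hG, ha, hb]
      ring
    calc Real.sqrt (∑ p : Fin n₃ × Fin n₂,
          ((PsiJac ψ ρ ζ κ C d - PsiJac ψ ρ ζ κ' C' d') p.1 p.2) ^ 2)
        = Real.sqrt (∑ p : Fin n₃ × Fin n₂, (F p.1 p.2 + G p.1 p.2) ^ 2) := by
          congr 1; exact Finset.sum_congr rfl fun p _ => by rw [hEq p]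
      _ ≤ _ := mink _ _
  -- step 2: bound mnorm F
  have hFb : mnorm F ≤ c₁ * mnorm (C - C') := by
    rw [mnorm_prod, mnorm_prod]
    calc Real.sqrt (∑ p : Fin n₃ × Fin n₂, (F p.1 p.2) ^ 2)
        ≤ Real.sqrt (∑ p : Fin n₃ × Fin n₂, (c₁ * |C p.1 p.2 - C' p.1 p.2|) ^ 2) := by
          apply sqrt_sum_sq_mono
          intro p
          rw [hF, abs_mul]
          exact mul_le_mul_of_nonneg_right (hc₁ _) (abs_nonneg _)
      _ = Real.sqrt (c₁ ^ 2 * ∑ p : Fin n₃ × Fin n₂, ((C - C') p.1 p.2) ^ 2) := by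
          rw [Finset.mul_sum]
          congr 1
          exact Finset.sum_congr rfl fun p _ => by
            rw [mul_pow, sq_abs]; simp [Pi.sub_apply]
      _ = c₁ * Real.sqrt (∑ p : Fin n₃ × Fin n₂, ((C - C') p.1 p.2) ^ 2) := by
          rw [Real.sqrt_mul (sq_nonneg _), Real.sqrt_sq hc₁0]
  -- step 3: |a i - b i| bound
  set u : Fin n₃ → ℝ := fun i => w i * B₁ + |d i - d' i| with hu
  have hu0 : ∀ i, 0 ≤ u i := fun i =>
    add_nonneg (mul_nonneg (hw0 i) hB₁0) (abs_nonneg _)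
  have hab : ∀ i, |a i - b i| ≤ u i + r i * P := by
    intro i
    have hsplit2 : a i - b i =
        (∑ j, (C i j - C' i j) * ρ κ ζ j) + (∑ j, C' i j * (ρ κ ζ j - ρ κ' ζ j))
          + (d i - d' i) := by
      have e : (∑ j, C i j * ρ κ ζ j) - ∑ j, C' i j * ρ κ' ζ j =
          ∑ j, ((C i j - C' i j) * ρ κ ζ j + C' i j * (ρ κ ζ j - ρ κ' ζ j)) := by
        rw [← Finset.sum_sub_distrib]
        exact Finset.sum_congr rfl fun j _ => by ring
      calc a i - b i
          = ((∑ j, C i j * ρ κ ζ j) - ∑ j, C' i j * ρ κ' ζ j) + (d i - d' i) := by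
            simp only [ha, hb]; ring
        _ = _ := by rw [e, Finset.sum_add_distrib]
    have h1 : |∑ j, (C i j - C' i j) * ρ κ ζ j| ≤ w i * B₁ := by
      calc |∑ j, (C i j - C' i j) * ρ κ ζ j|
          ≤ Real.sqrt (∑ j, (C i j - C' i j) ^ 2) * Real.sqrt (∑ j, (ρ κ ζ j) ^ 2) :=
            cs_abs _ _
        _ = w i * vnorm (ρ κ ζ) := rfl
        _ ≤ w i * B₁ := mul_le_mul_of_nonneg_left (hρB κ hκ) (hw0 i)
    have h2 : |∑ j, C' i j * (ρ κ ζ j - ρ κ' ζ j)| ≤ r i * P := by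
      calc |∑ j, C' i j * (ρ κ ζ j - ρ κ' ζ j)|
          ≤ Real.sqrt (∑ j, C' i j ^ 2) * Real.sqrt (∑ j, (ρ κ ζ j - ρ κ' ζ j) ^ 2) :=
            cs_abs _ _
        _ = r i * P := rfl
    have t1 := abs_add_le ((∑ j, (C i j - C' i j) * ρ κ ζ j)
        + (∑ j, C' i j * (ρ κ ζ j - ρ κ' ζ j))) (d i - d' i)
    have t2 := abs_add_le (∑ j, (C i j - C' i j) * ρ κ ζ j)
        (∑ j, C' i j * (ρ κ ζ j - ρ κ' ζ j))
    have hui : u i = w i * B₁ + |d i - d' i| := rfl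
    rw [hsplit2]
    linarith
  have hδ : ∀ i, |deriv ψ (a i) - deriv ψ (b i)| ≤ c₂ * (u i + r i * P) := by
    intro i
    calc |deriv ψ (a i) - deriv ψ (b i)| ≤ c₂ * |a i - b i| := deriv_lip ψ c₂ hψ' hc₂ _ _
      _ ≤ c₂ * (u i + r i * P) := mul_le_mul_of_nonneg_left (hab i) hc₂0
  -- step 4: bound mnorm G
  have hGsum : ∑ i, ∑ j, (G i j) ^ 2 = ∑ i, ((deriv ψ (a i) - deriv ψ (b i)) * r i) ^ 2 := by
    apply Finset.sum_congr rfl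
    intro i _
    rw [mul_pow, hr2 i, Finset.mul_sum]
    exact Finset.sum_congr rfl fun j _ => by simp only [hG]; ring
  have hGb : mnorm G ≤ c₂ * (D * (Real.sqrt (B₁ ^ 2 + 1) * S) + D ^ 2 * P) := by
    rw [mnorm, hGsum]
    calc Real.sqrt (∑ i, ((deriv ψ (a i) - deriv ψ (b i)) * r i) ^ 2)
        ≤ Real.sqrt (∑ i, (c₂ * (u i + r i * P) * r i) ^ 2) := by
          apply sqrt_sum_sq_mono
          intro i
          rw [abs_mul, abs_of_nonneg (hr0 i)]
          exact mul_le_mul (hδ i) le_rfl (hr0 i)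
            (mul_nonneg hc₂0 (add_nonneg (hu0 i) (mul_nonneg (hr0 i) hP0)))
      _ = Real.sqrt (c₂ ^ 2 * ∑ i, (u i * r i + r i * P * r i) ^ 2) := by
          rw [Finset.mul_sum]
          congr 1
          exact Finset.sum_congr rfl fun i _ => by ring
      _ = c₂ * Real.sqrt (∑ i, (u i * r i + r i * P * r i) ^ 2) := by
          rw [Real.sqrt_mul (sq_nonneg _), Real.sqrt_sq hc₂0]
      _ ≤ c₂ * (Real.sqrt (∑ i, (u i * r i) ^ 2) + Real.sqrt (∑ i, (r i * P * r i) ^ 2)) :=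
          mul_le_mul_of_nonneg_left (mink _ _) hc₂0
      _ ≤ c₂ * (D * (Real.sqrt (B₁ ^ 2 + 1) * S) + D ^ 2 * P) := by
          apply mul_le_mul_of_nonneg_left _ hc₂0
          have part1 : Real.sqrt (∑ i, (u i * r i) ^ 2) ≤ D * (Real.sqrt (B₁ ^ 2 + 1) * S) := by
            calc Real.sqrt (∑ i, (u i * r i) ^ 2)
                ≤ Real.sqrt (∑ i, (D * u i) ^ 2) := by
                  apply sqrt_sum_sq_mono
                  intro i
                  rw [abs_of_nonneg (mul_nonneg (hu0 i) (hr0 i)), mul_comm (D)]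
                  exact mul_le_mul_of_nonneg_left (hrD i) (hu0 i)
              _ = Real.sqrt (D ^ 2 * ∑ i, (u i) ^ 2) := by
                  rw [Finset.mul_sum]
                  congr 1
                  exact Finset.sum_congr rfl fun i _ => by ring
              _ = D * Real.sqrt (∑ i, (u i) ^ 2) := by
                  rw [Real.sqrt_mul (sq_nonneg _), Real.sqrt_sq hD0]
              _ ≤ D * Real.sqrt ((B₁ ^ 2 + 1) * S ^ 2) := by
                  apply mul_le_mul_of_nonneg_left _ hD0
                  apply Real.sqrt_le_sqrt
                  have hS2 : S ^ 2 = (mnorm (C - C')) ^ 2 + (vnorm (d - d')) ^ 2 :=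
                    Real.sq_sqrt (by positivity)
                  have hmn : (mnorm (C - C')) ^ 2 = ∑ i, ∑ j, ((C - C') i j) ^ 2 :=
                    Real.sq_sqrt (by positivity)
                  have hvn : (vnorm (d - d')) ^ 2 = ∑ i, ((d - d') i) ^ 2 :=
                    Real.sq_sqrt (by positivity)
                  rw [hS2, hmn, hvn, mul_add, Finset.mul_sum, Finset.mul_sum,
                    ← Finset.sum_add_distrib]
                  apply Finset.sum_le_sum
                  intro i _
                  have hwi : w i ^ 2 = ∑ j, ((C - C') i j) ^ 2 := by
                    rw [hw2 i]
                    exact Finset.sum_congr rfl fun j _ => by simp [Pi.sub_apply]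
                  have hdi : ((d - d') i) ^ 2 = (d i - d' i) ^ 2 := by simp [Pi.sub_apply]
                  have hui : u i = w i * B₁ + |d i - d' i| := rfl
                  rw [← hwi, hdi, hui]
                  have h1 := hw0 i
                  have habs : |d i - d' i| ^ 2 = (d i - d' i) ^ 2 := sq_abs _
                  nlinarith [sq_nonneg (w i - B₁ * |d i - d' i|), abs_nonneg (d i - d' i)]
              _ = D * (Real.sqrt (B₁ ^ 2 + 1) * S) := by
                  rw [Real.sqrt_mul (by positivity), Real.sqrt_sq hS0]
          have part2 : Real.sqrt (∑ i, (r i * P * r i) ^ 2) ≤ D ^ 2 * P := by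
            have hsum : ∑ i, (r i * P * r i) ^ 2 ≤ (M ^ 2 * P) ^ 2 := by
              have h1 : ∑ i, (r i * P * r i) ^ 2 = P ^ 2 * ∑ i, (r i ^ 2) ^ 2 := by
                rw [Finset.mul_sum]
                exact Finset.sum_congr rfl fun i _ => by ring
              have h2 : ∑ i, (r i ^ 2) ^ 2 ≤ (∑ i, r i ^ 2) ^ 2 :=
                Finset.sum_sq_le_sq_sum_of_nonneg (fun i _ => sq_nonneg _)
              have h3 : ∑ i, r i ^ 2 = M ^ 2 := by
                rw [hM2]
                exact Finset.sum_congr rfl fun i _ => hr2 i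
              rw [h1]
              calc P ^ 2 * ∑ i, (r i ^ 2) ^ 2 ≤ P ^ 2 * (∑ i, r i ^ 2) ^ 2 :=
                    mul_le_mul_of_nonneg_left h2 (sq_nonneg _)
                _ = (M ^ 2 * P) ^ 2 := by rw [h3]; ring
            calc Real.sqrt (∑ i, (r i * P * r i) ^ 2) ≤ Real.sqrt ((M ^ 2 * P) ^ 2) :=
                  Real.sqrt_le_sqrt hsum
              _ = |M ^ 2 * P| := Real.sqrt_sq_eq_abs _
              _ = M ^ 2 * P := abs_of_nonneg (mul_nonneg (sq_nonneg _) hP0)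
              _ ≤ D ^ 2 * P := by
                  apply mul_le_mul_of_nonneg_right _ hP0
                  nlinarith
          linarith
  -- step 5: c₁ * mnorm (C - C') ≤ n₃ * c₁ * S
  have hCS : c₁ * mnorm (C - C') ≤ (n₃ : ℝ) * c₁ * S := by
    rcases Nat.eq_zero_or_pos n₃ with h0 | hpos
    · subst h0
      have : mnorm (C - C') = 0 := by
        rw [mnorm]
        simp
      rw [this]
      simp
    · have hmS : mnorm (C - C') ≤ S := by
        rw [hS]
        calc mnorm (C - C') = Real.sqrt ((mnorm (C - C')) ^ 2) :=
              (Real.sqrt_sq (mnorm_nonneg _)).symm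
          _ ≤ _ := Real.sqrt_le_sqrt (le_add_of_nonneg_right (sq_nonneg _))
      have h1 : (1 : ℝ) ≤ (n₃ : ℝ) := by exact_mod_cast hpos
      calc c₁ * mnorm (C - C') ≤ c₁ * S := mul_le_mul_of_nonneg_left hmS hc₁0
        _ = 1 * (c₁ * S) := (one_mul _).symm
        _ ≤ (n₃ : ℝ) * (c₁ * S) := mul_le_mul_of_nonneg_right h1 (mul_nonneg hc₁0 hS0)
        _ = (n₃ : ℝ) * c₁ * S := by ring
  -- assemble
  have hGfinal : mnorm G ≤ D * c₂ * Real.sqrt (B₁ ^ 2 + 1) * S + c₂ * D ^ 2 * (L₁ * K) := by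
    calc mnorm G ≤ c₂ * (D * (Real.sqrt (B₁ ^ 2 + 1) * S) + D ^ 2 * P) := hGb
      _ ≤ c₂ * (D * (Real.sqrt (B₁ ^ 2 + 1) * S) + D ^ 2 * (L₁ * K)) := by
          apply mul_le_mul_of_nonneg_left _ hc₂0
          have : D ^ 2 * P ≤ D ^ 2 * (L₁ * K) :=
            mul_le_mul_of_nonneg_left hPK (sq_nonneg _)
          linarith
      _ = D * c₂ * Real.sqrt (B₁ ^ 2 + 1) * S + c₂ * D ^ 2 * (L₁ * K) := by ring
  calc mnorm (PsiJac ψ ρ ζ κ C d - PsiJac ψ ρ ζ κ' C' d') ≤ mnorm F + mnorm G := hsplit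
    _ ≤ c₁ * mnorm (C - C') + (D * c₂ * Real.sqrt (B₁ ^ 2 + 1) * S
        + c₂ * D ^ 2 * (L₁ * K)) := add_le_add hFb hGfinal
    _ ≤ (n₃ : ℝ) * c₁ * S + (D * c₂ * Real.sqrt (B₁ ^ 2 + 1) * S
        + c₂ * D ^ 2 * (L₁ * K)) := by linarith
    _ = ((n₃ : ℝ) * c₁ + D * c₂ * Real.sqrt (B₁ ^ 2 + 1)) * S + c₂ * D ^ 2 * L₁ * K := by ring
end

section
/- Let χ(μ) = Ψ_λ(ρ_κ(ζ)) where μ = (κ, λ), λ = (C, d) ranges over {λ : ‖λ‖ < D} and Ψ_λ(x) = ψ(Cx + d). Assume κ ↦ ρ_κ(ζ) is Lipschitz with constant L₁, κ ↦ ∇ρ_κ(ζ) is Lipschitz with constant L₂, ‖ρ_κ(ζ)‖ ≤ B₁ and ‖∇ρ_κ(ζ)‖ ≤ B₂ for all κ. Then the partial gradient of χ with respect to κ, given by (∂/∂κ)χ(μ) = Ψ′_λ(ρ_κ(ζ))·∇ρ_κ(ζ), is Lipschitz in μ with constant √m₂, where m₂ = (n₃c₁DL₂ + B₂c₂D²L₁)²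 + B₂²(n₃c₁ + Dc₂(B₁² + 1)^{1/2})². -/
/-!
The gradient factors as `Ψ′_λ(x) · J` with `Ψ′_λ(x) = diag(ψ′(Cx + d)) · C`, and everything is
estimated with the submultiplicativity of the Frobenius norm. Splitting
`Ψ′J - Ψ″J′ = Ψ′(J - J′) + (Ψ′ - Ψ″)J′` and
`Ψ′ - Ψ″ = diag(ψ′(u) - ψ′(u′)) C + diag(ψ′(u′)) (C - C′)` with `u = Cx + d`, the differences of
slopes are controlled by the Lipschitz constant `c₂` of `ψ′` and
`‖u - u′‖ ≤ ‖C‖‖x - x′‖ + ‖C - C′‖‖x′‖ + ‖d - d′‖`, while a diagonal of slopes bounded by `c₁`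
has Frobenius norm at most `n₃ c₁`. This gives a bound linear in `‖κ - κ′‖`, `‖C - C′‖`,
`‖d - d′‖`, which Cauchy–Schwarz turns into `√m₂` times the Euclidean norm of the increment.
-/

open scoped BigOperators

/-- The κ-partial gradient of χ: (∂/∂κ)χ(μ) = Ψ′_λ(ρ_κ(ζ))·∇ρ_κ(ζ), where
Ψ′_λ(x) = diag(ψ′(Cx + d))·C and `J κ` is the Jacobian ∇ρ_κ(ζ) ∈ ℝ^{n₂×l₁}. -/
noncomputable def gradChiKappa {n₁ n₂ n₃ l₁ : ℕ} (ψ : ℝ → ℝ)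
    (ρ : (Fin l₁ → ℝ) → (Fin n₁ → ℝ) → Fin n₂ → ℝ)
    (J : (Fin l₁ → ℝ) → Fin n₂ → Fin l₁ → ℝ) (ζ : Fin n₁ → ℝ)
    (κ : Fin l₁ → ℝ) (C : Fin n₃ → Fin n₂ → ℝ) (d : Fin n₃ → ℝ) :
    Fin n₃ → Fin l₁ → ℝ :=
  fun k a => ∑ j, (deriv ψ (∑ j', C k j' * ρ κ ζ j' + d k) * C k j) * J κ j a

open scoped Matrix.Norms.Frobenius

open Matrix WithLp

section Norms

variable {𝕜 ι m n l : Type*} [Fintype ι] [Fintype m] [Fintype n] [Fintype l]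

lemma vnorm_eq_norm {k : ℕ} (v : Fin k → ℝ) : vnorm v = ‖toLp 2 v‖ := by
  simp [vnorm, EuclideanSpace.norm_eq]

lemma mnorm_eq_norm {k l : ℕ} (A : Fin k → Fin l → ℝ) : mnorm A = ‖of A‖ := by
  simp [mnorm, frobenius_norm_def, Real.sqrt_eq_rpow]

lemma norm_toLp_two_le_card_mul [DecidableEq ι] {s : ι → ℝ} {c : ℝ} (hs : ∀ i, |s i| ≤ c) :
    ‖toLp 2 s‖ ≤ Fintype.card ι * c :=
  calc ‖toLp 2 s‖ = ‖∑ i, EuclideanSpace.single i (s i)‖ := by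
        congr 1; ext i; simp
    _ ≤ ∑ i, ‖EuclideanSpace.single i (s i)‖ := norm_sum_le _ _
    _ ≤ ∑ _i : ι, c := Finset.sum_le_sum fun i _ => by simpa using hs i
    _ = Fintype.card ι * c := by simp

lemma norm_toLp_comp_sub_comp_le {f : ℝ → ℝ} {c : ℝ} (hc : 0 ≤ c)
    (hf : ∀ s t, |f s - f t| ≤ c * |s - t|) (u v : ι → ℝ) :
    ‖toLp 2 (f ∘ u - f ∘ v)‖ ≤ c * ‖toLp 2 (u - v)‖ := by
  rw [EuclideanSpace.norm_eq, EuclideanSpace.norm_eq, ← Real.sqrt_sq hc,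
    ← Real.sqrt_mul (sq_nonneg c), Finset.mul_sum]
  gcongr with i
  simpa [mul_pow] using pow_le_pow_left₀ (abs_nonneg _) (hf (u i) (v i)) 2

lemma frobenius_norm_mulVec_le [RCLike 𝕜] (A : Matrix m n 𝕜) (v : n → 𝕜) :
    ‖toLp 2 (A *ᵥ v)‖ ≤ ‖A‖ * ‖toLp 2 v‖ := by
  simpa only [← frobenius_norm_replicateCol (ι := Unit), replicateCol_mulVec]
    using frobenius_norm_mul A (replicateCol Unit v)

lemma norm_mulVec_add_sub_mulVec_add_le (C C' : Matrix m n ℝ) (x x' : n → ℝ) (d d' : m → ℝ) :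
    ‖toLp 2 (C *ᵥ x + d - (C' *ᵥ x' + d'))‖
      ≤ ‖C‖ * ‖toLp 2 (x - x')‖ + ‖C - C'‖ * ‖toLp 2 x'‖ + ‖toLp 2 (d - d')‖ := by
  have hsplit : C *ᵥ x + d - (C' *ᵥ x' + d') = C *ᵥ (x - x') + (C - C') *ᵥ x' + (d - d') := by
    rw [mulVec_sub, sub_mulVec]; abel
  rw [hsplit, WithLp.toLp_add, WithLp.toLp_add]
  refine norm_add₃_le.trans ?_
  gcongr <;> exact frobenius_norm_mulVec_le _ _

lemma frobenius_norm_mul_sub_mul_le [RCLike 𝕜] (A A' : Matrix m n 𝕜) (B B' : Matrix n l 𝕜) :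
    ‖A * B - A' * B'‖ ≤ ‖A‖ * ‖B - B'‖ + ‖A - A'‖ * ‖B'‖ := by
  rw [show A * B - A' * B' = A * (B - B') + (A - A') * B' by
    rw [Matrix.mul_sub, Matrix.sub_mul]; abel]
  exact (norm_add_le _ _).trans (add_le_add (frobenius_norm_mul _ _) (frobenius_norm_mul _ _))

end Norms

lemma abs_sub_le_of_abs_deriv_le {f : ℝ → ℝ} {c : ℝ} (hf : Differentiable ℝ f)
    (hc : ∀ t, |deriv f t| ≤ c) (s t : ℝ) : |f s - f t| ≤ c * |s - t| := by
  simpa [Real.norm_eq_abs] using Convex.norm_image_sub_le_of_norm_deriv_le (s := Set.univ)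
    (fun z _ => hf z) (fun z _ => by simpa [Real.norm_eq_abs] using hc z)
    convex_univ (Set.mem_univ t) (Set.mem_univ s)

section LayerJacobian

variable {m n l : Type*} [Fintype m] [DecidableEq m] [Fintype n] [Fintype l]

/-- The Jacobian `Ψ′_λ(x) = diag(f(Cx + d))·C` of the layer `x ↦ ψ(Cx + d)`, for `f = ψ′`. -/
noncomputable def layerJacobian (f : ℝ → ℝ) (C : Matrix m n ℝ) (d : m → ℝ) (x : n → ℝ) :
    Matrix m n ℝ :=
  diagonal (f ∘ (C *ᵥ x + d)) * C

variable {f : ℝ → ℝ} {c₁ c₂ : ℝ}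

lemma norm_layerJacobian_le (hf : ∀ t, |f t| ≤ c₁) (C : Matrix m n ℝ) (d : m → ℝ)
    (x : n → ℝ) : ‖layerJacobian f C d x‖ ≤ Fintype.card m * c₁ * ‖C‖ := by
  refine (frobenius_norm_mul _ _).trans ?_
  rw [frobenius_norm_diagonal]
  gcongr
  exact norm_toLp_two_le_card_mul fun k => hf _

lemma norm_layerJacobian_sub_le (hf : ∀ t, |f t| ≤ c₁) (hc₂ : 0 ≤ c₂)
    (hf_lip : ∀ s t, |f s - f t| ≤ c₂ * |s - t|) (C C' : Matrix m n ℝ) (d d' : m → ℝ)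
    (x x' : n → ℝ) :
    ‖layerJacobian f C d x - layerJacobian f C' d' x'‖
      ≤ c₂ * ‖C‖ * (‖C‖ * ‖toLp 2 (x - x')‖ + ‖C - C'‖ * ‖toLp 2 x'‖ + ‖toLp 2 (d - d')‖)
        + Fintype.card m * c₁ * ‖C - C'‖ := by
  set u := C *ᵥ x + d
  set u' := C' *ᵥ x' + d'
  have hsplit : layerJacobian f C d x - layerJacobian f C' d' x'
      = diagonal (f ∘ u - f ∘ u') * C + diagonal (f ∘ u') * (C - C') := by
    have hdiag : diagonal (f ∘ u - f ∘ u') = diagonal (f ∘ u) - diagonal (f ∘ u') :=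
      (diagonal_sub _ _).symm
    rw [hdiag, Matrix.sub_mul, Matrix.mul_sub, layerJacobian, layerJacobian]
    abel
  have hslope : ‖toLp 2 (f ∘ u - f ∘ u')‖
      ≤ c₂ * (‖C‖ * ‖toLp 2 (x - x')‖ + ‖C - C'‖ * ‖toLp 2 x'‖ + ‖toLp 2 (d - d')‖) :=
    (norm_toLp_comp_sub_comp_le hc₂ hf_lip u u').trans
      (by gcongr; exact norm_mulVec_add_sub_mulVec_add_le C C' x x' d d')
  rw [hsplit]
  refine (norm_add_le _ _).trans (add_le_add ?_ ?_)
  · refine (frobenius_norm_mul _ _).trans ?_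
    rw [frobenius_norm_diagonal]
    calc _ ≤ c₂ * (‖C‖ * ‖toLp 2 (x - x')‖ + ‖C - C'‖ * ‖toLp 2 x'‖ + ‖toLp 2 (d - d')‖) * ‖C‖ :=
          by gcongr
      _ = _ := by ring
  · refine (frobenius_norm_mul _ _).trans ?_
    rw [frobenius_norm_diagonal]
    gcongr
    exact norm_toLp_two_le_card_mul fun k => hf _

lemma norm_layerJacobian_mul_sub_mul_le (hf : ∀ t, |f t| ≤ c₁) (hc₂ : 0 ≤ c₂)
    (hf_lip : ∀ s t, |f s - f t| ≤ c₂ * |s - t|) {C C' : Matrix m n ℝ} {d d' : m → ℝ}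
    {x x' : n → ℝ} {J J' : Matrix n l ℝ} {D B₁ B₂ : ℝ} (hC : ‖C‖ ≤ D)
    (hx' : ‖toLp 2 x'‖ ≤ B₁) (hJ' : ‖J'‖ ≤ B₂) :
    ‖layerJacobian f C d x * J - layerJacobian f C' d' x' * J'‖
      ≤ Fintype.card m * c₁ * D * ‖J - J'‖
        + (c₂ * D * (D * ‖toLp 2 (x - x')‖ + ‖C - C'‖ * B₁ + ‖toLp 2 (d - d')‖)
          + Fintype.card m * c₁ * ‖C - C'‖) * B₂ := by
  have hc₁ : 0 ≤ c₁ := (abs_nonneg _).trans (hf 0)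
  have hD : 0 ≤ D := (norm_nonneg _).trans hC
  refine (frobenius_norm_mul_sub_mul_le _ _ _ _).trans (add_le_add ?_ ?_)
  · exact mul_le_mul_of_nonneg_right
      ((norm_layerJacobian_le hf C d x).trans (by gcongr)) (norm_nonneg _)
  · refine mul_le_mul_of_nonneg ((norm_layerJacobian_sub_le hf hc₂ hf_lip C C' d d' x x').trans ?_)
      hJ' (norm_nonneg _) ((norm_nonneg _).trans hJ')
    gcongr

end LayerJacobian

lemma of_gradChiKappa {n₁ n₂ n₃ l₁ : ℕ} (ψ : ℝ → ℝ)
    (ρ : (Fin l₁ → ℝ) → (Fin n₁ → ℝ) → Fin n₂ → ℝ) (J : (Fin l₁ → ℝ) → Fin n₂ → Fin l₁ → ℝ)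
    (ζ : Fin n₁ → ℝ) (κ : Fin l₁ → ℝ) (C : Fin n₃ → Fin n₂ → ℝ) (d : Fin n₃ → ℝ) :
    of (gradChiKappa ψ ρ J ζ κ C d) = layerJacobian (deriv ψ) (of C) d (ρ κ ζ) * of (J κ) := by
  ext k a
  rw [layerJacobian, mul_apply]
  simp [gradChiKappa, diagonal_mul, mulVec, dotProduct]

lemma mul_add_mul_le_sqrt_mul_sqrt (a b x y : ℝ) :
    a * x + b * y ≤ √(a ^ 2 + b ^ 2) * √(x ^ 2 + y ^ 2) := by
  rw [← Real.sqrt_mul (by positivity)]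
  exact Real.le_sqrt_of_sq_le (by nlinarith [sq_nonneg (a * y - b * x)])

lemma le_sqrt_sq_add_sq (x y : ℝ) : x ≤ √(x ^ 2 + y ^ 2) :=
  Real.le_sqrt_of_sq_le (le_add_of_nonneg_right (sq_nonneg y))

lemma mul_add_mul_add_le_sqrt_mul_sqrt {α β B₂ : ℝ} (hα : 0 ≤ α) (hβ : 0 ≤ β) (hB₂ : 0 ≤ B₂)
    (A B₁ a p q : ℝ) :
    A * a + B₂ * (α * p + β * (B₁ * p + q))
      ≤ √(A ^ 2 + B₂ ^ 2 * (α + β * √(B₁ ^ 2 + 1)) ^ 2) * √(a ^ 2 + p ^ 2 + q ^ 2) := by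
  have hp : p ≤ √(p ^ 2 + q ^ 2) := le_sqrt_sq_add_sq p q
  have hB₁ : B₁ * p + 1 * q ≤ √(B₁ ^ 2 + 1 ^ 2) * √(p ^ 2 + q ^ 2) :=
    mul_add_mul_le_sqrt_mul_sqrt B₁ 1 p q
  rw [one_mul, one_pow] at hB₁
  calc A * a + B₂ * (α * p + β * (B₁ * p + q))
      ≤ A * a + B₂ * (α * √(p ^ 2 + q ^ 2) + β * (√(B₁ ^ 2 + 1) * √(p ^ 2 + q ^ 2))) := by
        gcongr
    _ = A * a + B₂ * (α + β * √(B₁ ^ 2 + 1)) * √(p ^ 2 + q ^ 2) := by ring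
    _ ≤ √(A ^ 2 + (B₂ * (α + β * √(B₁ ^ 2 + 1))) ^ 2) * √(a ^ 2 + √(p ^ 2 + q ^ 2) ^ 2) :=
        mul_add_mul_le_sqrt_mul_sqrt _ _ _ _
    _ = _ := by rw [mul_pow, Real.sq_sqrt (by positivity), ← add_assoc]

theorem statement3_general {n₁ n₂ n₃ l₁ : ℕ} (ψ : ℝ → ℝ) (c₁ c₂ : ℝ)
    (hψ' : Differentiable ℝ (deriv ψ))
    (hc₁ : ∀ x, |deriv ψ x| ≤ c₁) (hc₂ : ∀ x, |deriv (deriv ψ) x| ≤ c₂)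
    (𝒦 : Set (Fin l₁ → ℝ))
    (ρ : (Fin l₁ → ℝ) → (Fin n₁ → ℝ) → Fin n₂ → ℝ)
    (J : (Fin l₁ → ℝ) → Fin n₂ → Fin l₁ → ℝ) (ζ : Fin n₁ → ℝ)
    (D L₁ L₂ B₁ B₂ : ℝ)
    (hρLip : ∀ κ ∈ 𝒦, ∀ κ' ∈ 𝒦, vnorm (ρ κ ζ - ρ κ' ζ) ≤ L₁ * vnorm (κ - κ'))
    (hJLip : ∀ κ ∈ 𝒦, ∀ κ' ∈ 𝒦, mnorm (J κ - J κ') ≤ L₂ * vnorm (κ - κ'))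
    (hρB : ∀ κ ∈ 𝒦, vnorm (ρ κ ζ) ≤ B₁)
    (hJB : ∀ κ ∈ 𝒦, mnorm (J κ) ≤ B₂) :
    ∀ κ ∈ 𝒦, ∀ κ' ∈ 𝒦, ∀ (C C' : Fin n₃ → Fin n₂ → ℝ) (d d' : Fin n₃ → ℝ),
      Real.sqrt ((mnorm C) ^ 2 + (vnorm d) ^ 2) < D →
      Real.sqrt ((mnorm C') ^ 2 + (vnorm d') ^ 2) < D →
      mnorm (gradChiKappa ψ ρ J ζ κ C d - gradChiKappa ψ ρ J ζ κ' C' d')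
        ≤ Real.sqrt (((n₃ : ℝ) * c₁ * D * L₂ + B₂ * c₂ * D ^ 2 * L₁) ^ 2
              + B₂ ^ 2 * ((n₃ : ℝ) * c₁ + D * c₂ * Real.sqrt (B₁ ^ 2 + 1)) ^ 2) *
          Real.sqrt ((vnorm (κ - κ')) ^ 2 + (mnorm (C - C')) ^ 2 + (vnorm (d - d')) ^ 2) := by
  intro κ hκ κ' hκ' C C' d d' hCd _
  simp only [vnorm_eq_norm, mnorm_eq_norm, ← of_sub_of] at *
  rw [of_gradChiKappa, of_gradChiKappa]
  have hc₁_nonneg : 0 ≤ c₁ := (abs_nonneg _).trans (hc₁ 0)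
  have hc₂_nonneg : 0 ≤ c₂ := (abs_nonneg _).trans (hc₂ 0)
  have hB₂ : 0 ≤ B₂ := (norm_nonneg _).trans (hJB κ hκ)
  have hC : ‖of C‖ ≤ D := (le_sqrt_sq_add_sq _ _).trans hCd.le
  have hD : 0 ≤ D := (norm_nonneg _).trans hC
  refine (norm_layerJacobian_mul_sub_mul_le hc₁ hc₂_nonneg (abs_sub_le_of_abs_deriv_le hψ' hc₂) hC
    (hρB κ' hκ') (hJB κ' hκ')).trans ?_
  rw [Fintype.card_fin]
  set a := ‖toLp 2 (κ - κ')‖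
  set p := ‖of C - of C'‖
  set q := ‖toLp 2 (d - d')‖
  calc _ ≤ n₃ * c₁ * D * (L₂ * a) + (c₂ * D * (D * (L₁ * a) + p * B₁ + q) + n₃ * c₁ * p) * B₂ := by
        gcongr
        · exact hJLip κ hκ κ' hκ'
        · exact hρLip κ hκ κ' hκ'
    _ = (n₃ * c₁ * D * L₂ + B₂ * c₂ * D ^ 2 * L₁) * a
          + B₂ * (n₃ * c₁ * p + D * c₂ * (B₁ * p + q)) := by ring
    _ ≤ _ := mul_add_mul_add_le_sqrt_mul_sqrt (by positivity) (by positivity) hB₂ _ _ _ _ _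

/-- the κ-partial gradient of χ, (∂/∂κ)χ(μ) = Ψ′_λ(ρ_κ(ζ))·∇ρ_κ(ζ),
is Lipschitz in μ = (κ, λ) with constant √m₂. -/
theorem statement3 {n₁ n₂ n₃ l₁ : ℕ} (ψ : ℝ → ℝ) (c₁ c₂ : ℝ)
    (hψ : Differentiable ℝ ψ) (hψ' : Differentiable ℝ (deriv ψ))
    (hc₁ : ∀ x, |deriv ψ x| ≤ c₁) (hc₂ : ∀ x, |deriv (deriv ψ) x| ≤ c₂)
    (𝒦 : Set (Fin l₁ → ℝ))
    (ρ : (Fin l₁ → ℝ) → (Fin n₁ → ℝ) → Fin n₂ → ℝ)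
    (J : (Fin l₁ → ℝ) → Fin n₂ → Fin l₁ → ℝ) (ζ : Fin n₁ → ℝ)
    (hJ : ∀ κ ∈ 𝒦, HasFDerivAt (fun κ' => ρ κ' ζ)
      (Matrix.mulVecLin (Matrix.of (J κ))).toContinuousLinearMap κ)
    (D L₁ L₂ B₁ B₂ : ℝ)
    (hρLip : ∀ κ ∈ 𝒦, ∀ κ' ∈ 𝒦, vnorm (ρ κ ζ - ρ κ' ζ) ≤ L₁ * vnorm (κ - κ'))
    (hJLip : ∀ κ ∈ 𝒦, ∀ κ' ∈ 𝒦, mnorm (J κ - J κ') ≤ L₂ * vnorm (κ - κ'))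
    (hρB : ∀ κ ∈ 𝒦, vnorm (ρ κ ζ) ≤ B₁)
    (hJB : ∀ κ ∈ 𝒦, mnorm (J κ) ≤ B₂) :
    ∀ κ ∈ 𝒦, ∀ κ' ∈ 𝒦, ∀ (C C' : Fin n₃ → Fin n₂ → ℝ) (d d' : Fin n₃ → ℝ),
      Real.sqrt ((mnorm C) ^ 2 + (vnorm d) ^ 2) < D →
      Real.sqrt ((mnorm C') ^ 2 + (vnorm d') ^ 2) < D →
      mnorm (gradChiKappa ψ ρ J ζ κ C d - gradChiKappa ψ ρ J ζ κ' C' d')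
        ≤ Real.sqrt (((n₃ : ℝ) * c₁ * D * L₂ + B₂ * c₂ * D ^ 2 * L₁) ^ 2
              + B₂ ^ 2 * ((n₃ : ℝ) * c₁ + D * c₂ * Real.sqrt (B₁ ^ 2 + 1)) ^ 2) *
          Real.sqrt ((vnorm (κ - κ')) ^ 2 + (mnorm (C - C')) ^ 2 + (vnorm (d - d')) ^ 2) :=
  statement3_general ψ c₁ c₂ hψ' hc₁ hc₂ 𝒦 ρ J ζ D L₁ L₂ B₁ B₂ hρLip hJLip hρB hJB
end

section
/- For a fixed input ζ_x ∈ ℝ^{ℓ₀} with S = ‖ζ_x‖, the gradient of the first-layer map N₁(Θ₁) = σ₁(A^{(1)}ζ_x + b^{(1)}) with respect to the flattened parameters Θ₁ = (A^{(1)}, b^{(1)}) is Lipschitz continuous with constant L_{∇N₁} = σ″_max·√((S² + 1)(3S² + 2)). -/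
open scoped BigOperators

/-- Partial derivative (∂/∂A_{ij}) of the first-layer map N₁(A,b) = σ(Aζ + b):
equals σ′(A_{i,·}ζ + b_i)·ζ_j·e_i; indexed by output component `k`. -/
noncomputable def gradLayer1A {ℓ₀ ℓ₁ : ℕ} (σ : ℝ → ℝ) (ζ : Fin ℓ₀ → ℝ)
    (A : Fin ℓ₁ → Fin ℓ₀ → ℝ) (b : Fin ℓ₁ → ℝ) : Fin ℓ₁ → Fin ℓ₁ → Fin ℓ₀ → ℝ :=
  fun k i j => if k = i then deriv σ (∑ j', A i j' * ζ j' + b i) * ζ j else 0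

/-- Partial derivative (∂/∂b_i) of the first-layer map N₁(A,b) = σ(Aζ + b):
equals σ′(A_{i,·}ζ + b_i)·e_i; indexed by output component `k`. -/
noncomputable def gradLayer1b {ℓ₀ ℓ₁ : ℕ} (σ : ℝ → ℝ) (ζ : Fin ℓ₀ → ℝ)
    (A : Fin ℓ₁ → Fin ℓ₀ → ℝ) (b : Fin ℓ₁ → ℝ) : Fin ℓ₁ → Fin ℓ₁ → ℝ :=
  fun k i => if k = i then deriv σ (∑ j', A i j' * ζ j' + b i) else 0

open Finset

/-!
With `u = Aζ + b`, the only nonzero entries of ∇N₁ are `σ′(uₖ) ζⱼ` and `σ′(uₖ)`, so the squared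
distance of the gradients at `(A, b)` and `(A', b')` is `(S² + 1) ∑ₖ (σ′(uₖ) - σ′(u'ₖ))²`. Since
`σ′` is `σ″_max`-Lipschitz and, by Cauchy–Schwarz,
`(uₖ - u'ₖ)² ≤ (‖(A - A')ₖ‖² + (b - b')ₖ²)(S² + 1)`, this is at most
`σ″_max² (S² + 1)² ‖(A - A', b - b')‖²`, and `S² + 1 ≤ 3S² + 2`.
-/

noncomputable def layer1PreAct {ℓ₀ ℓ₁ : ℕ} (ζ : Fin ℓ₀ → ℝ) (A : Fin ℓ₁ → Fin ℓ₀ → ℝ)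
    (b : Fin ℓ₁ → ℝ) (i : Fin ℓ₁) : ℝ :=
  ∑ j, A i j * ζ j + b i

lemma sq_vnorm {n : ℕ} (v : Fin n → ℝ) : vnorm v ^ 2 = ∑ i, v i ^ 2 :=
  Real.sq_sqrt (sum_nonneg fun _ _ => sq_nonneg _)

lemma sq_mnorm {m n : ℕ} (A : Fin m → Fin n → ℝ) : mnorm A ^ 2 = ∑ i, ∑ j, A i j ^ 2 :=
  Real.sq_sqrt (sum_nonneg fun _ _ => sum_nonneg fun _ _ => sq_nonneg _)

lemma sq_sum_mul_add_le {ι : Type*} [Fintype ι] (x y : ι → ℝ) (c : ℝ) :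
    (∑ j, x j * y j + c) ^ 2 ≤ (∑ j, x j ^ 2 + c ^ 2) * (∑ j, y j ^ 2 + 1) := by
  have h := sum_mul_sq_le_sq_mul_sq (univ : Finset (Option ι))
    (fun o => o.elim c x) (fun o => o.elim 1 y)
  simpa [Fintype.sum_option, add_comm] using h

lemma sq_layer1PreAct_sub_le {ℓ₀ ℓ₁ : ℕ} (ζ : Fin ℓ₀ → ℝ) (A A' : Fin ℓ₁ → Fin ℓ₀ → ℝ)
    (b b' : Fin ℓ₁ → ℝ) (i : Fin ℓ₁) :
    (layer1PreAct ζ A b i - layer1PreAct ζ A' b' i) ^ 2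
      ≤ (∑ j, (A - A') i j ^ 2 + (b - b') i ^ 2) * (∑ j, ζ j ^ 2 + 1) := by
  have hsub : layer1PreAct ζ A b i - layer1PreAct ζ A' b' i
      = ∑ j, (A - A') i j * ζ j + (b - b') i := by
    simp only [layer1PreAct, Pi.sub_apply, sub_mul, sum_sub_distrib]
    ring
  rw [hsub]
  exact sq_sum_mul_add_le _ _ _

lemma sum_sq_ite_sub_ite {n : ℕ} (k : Fin n) (f g : Fin n → ℝ) :
    ∑ i, ((if k = i then f i else 0) - (if k = i then g i else 0)) ^ 2 = (f k - g k) ^ 2 := by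
  rw [Fintype.sum_eq_single k fun i hi => by simp [Ne.symm hi]]
  simp

lemma sq_dist_gradLayer1_eq {ℓ₀ ℓ₁ : ℕ} (σ : ℝ → ℝ) (ζ : Fin ℓ₀ → ℝ)
    (A A' : Fin ℓ₁ → Fin ℓ₀ → ℝ) (b b' : Fin ℓ₁ → ℝ) :
    (∑ k, ∑ i, ∑ j, (gradLayer1A σ ζ A b k i j - gradLayer1A σ ζ A' b' k i j) ^ 2)
        + (∑ k, ∑ i, (gradLayer1b σ ζ A b k i - gradLayer1b σ ζ A' b' k i) ^ 2)
      = ∑ k, (deriv σ (layer1PreAct ζ A b k) - deriv σ (layer1PreAct ζ A' b' k)) ^ 2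
          * (∑ j, ζ j ^ 2 + 1) := by
  rw [← sum_add_distrib]
  refine sum_congr rfl fun k _ => ?_
  rw [sum_comm]
  simp only [gradLayer1A, gradLayer1b, sum_sq_ite_sub_ite, mul_pow, ← sub_mul, ← mul_sum]
  unfold layer1PreAct
  ring

lemma sq_dist_gradLayer1_le {ℓ₀ ℓ₁ : ℕ} (σ : ℝ → ℝ) (L : ℝ)
    (hL : ∀ x y, |deriv σ x - deriv σ y| ≤ L * |x - y|) (ζ : Fin ℓ₀ → ℝ)
    (A A' : Fin ℓ₁ → Fin ℓ₀ → ℝ) (b b' : Fin ℓ₁ → ℝ) :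
    (∑ k, ∑ i, ∑ j, (gradLayer1A σ ζ A b k i j - gradLayer1A σ ζ A' b' k i j) ^ 2)
        + (∑ k, ∑ i, (gradLayer1b σ ζ A b k i - gradLayer1b σ ζ A' b' k i) ^ 2)
      ≤ L ^ 2 * (vnorm ζ ^ 2 + 1) ^ 2 * (mnorm (A - A') ^ 2 + vnorm (b - b') ^ 2) := by
  rw [sq_dist_gradLayer1_eq, sq_mnorm, sq_vnorm, sq_vnorm, ← sum_add_distrib, mul_sum]
  refine sum_le_sum fun i _ => ?_
  have hderiv : (deriv σ (layer1PreAct ζ A b i) - deriv σ (layer1PreAct ζ A' b' i)) ^ 2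
      ≤ L ^ 2 * (layer1PreAct ζ A b i - layer1PreAct ζ A' b' i) ^ 2 := by
    rw [← sq_abs, ← sq_abs (_ - _), ← mul_pow]
    exact pow_le_pow_left₀ (abs_nonneg _) (hL _ _) 2
  calc _ ≤ L ^ 2 * ((∑ j, (A - A') i j ^ 2 + (b - b') i ^ 2) * (∑ j, ζ j ^ 2 + 1))
          * (∑ j, ζ j ^ 2 + 1) := by
        gcongr
        exact hderiv.trans (by gcongr; exact sq_layer1PreAct_sub_le ζ A A' b b' i)
    _ = _ := by ring

theorem statement6_general {ℓ₀ ℓ₁ : ℕ} (σ : ℝ → ℝ) (σ''max : ℝ)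
    (hσd2 : Differentiable ℝ (deriv σ))
    (hσ'' : ∀ x, |deriv (deriv σ) x| ≤ σ''max)
    (ζ : Fin ℓ₀ → ℝ) :
    ∀ (A A' : Fin ℓ₁ → Fin ℓ₀ → ℝ) (b b' : Fin ℓ₁ → ℝ),
      Real.sqrt
        ((∑ k, ∑ i, ∑ j, (gradLayer1A σ ζ A b k i j - gradLayer1A σ ζ A' b' k i j) ^ 2)
          + (∑ k, ∑ i, (gradLayer1b σ ζ A b k i - gradLayer1b σ ζ A' b' k i) ^ 2))
        ≤ σ''max * Real.sqrt (((vnorm ζ) ^ 2 + 1) * (3 * (vnorm ζ) ^ 2 + 2)) *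
          Real.sqrt ((mnorm (A - A')) ^ 2 + (vnorm (b - b')) ^ 2) := by
  intro A A' b b'
  have hσ''_nonneg : 0 ≤ σ''max := (abs_nonneg _).trans (hσ'' 0)
  have hLip : ∀ x y, |deriv σ x - deriv σ y| ≤ σ''max * |x - y| := fun x y => by
    simpa only [Real.norm_eq_abs] using convex_univ.norm_image_sub_le_of_norm_deriv_le
      (fun z _ => hσd2 z) (fun z _ => hσ'' z) (Set.mem_univ y) (Set.mem_univ x)
  have hS : 0 ≤ vnorm ζ ^ 2 := sq_nonneg _
  calc _ ≤ Real.sqrt (σ''max ^ 2 * ((vnorm ζ ^ 2 + 1) * (3 * vnorm ζ ^ 2 + 2))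
          * (mnorm (A - A') ^ 2 + vnorm (b - b') ^ 2)) := by
        refine Real.sqrt_le_sqrt ((sq_dist_gradLayer1_le σ σ''max hLip ζ A A' b b').trans ?_)
        rw [sq (vnorm ζ ^ 2 + 1)]
        gcongr <;> linarith
    _ = _ := by
        rw [Real.sqrt_mul (by positivity), Real.sqrt_mul (sq_nonneg _), Real.sqrt_sq hσ''_nonneg]

/-- the gradient of the first-layer map N₁ with respect to Θ₁ = (A, b) is
Lipschitz continuous with constant σ″_max·√((S² + 1)(3S² + 2)), where S = ‖ζ_x‖. -/
theorem statement6 {ℓ₀ ℓ₁ : ℕ} (σ : ℝ → ℝ) (σmax σ'max σ''max : ℝ)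
    (hσd : Differentiable ℝ σ) (hσd2 : Differentiable ℝ (deriv σ))
    (hσb : ∀ x, |σ x| ≤ σmax) (hσ' : ∀ x, |deriv σ x| ≤ σ'max)
    (hσ'' : ∀ x, |deriv (deriv σ) x| ≤ σ''max)
    (ζ : Fin ℓ₀ → ℝ) :
    ∀ (A A' : Fin ℓ₁ → Fin ℓ₀ → ℝ) (b b' : Fin ℓ₁ → ℝ),
      Real.sqrt
        ((∑ k, ∑ i, ∑ j, (gradLayer1A σ ζ A b k i j - gradLayer1A σ ζ A' b' k i j) ^ 2)
          + (∑ k, ∑ i, (gradLayer1b σ ζ A b k i - gradLayer1b σ ζ A' b' k i) ^ 2))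
        ≤ σ''max * Real.sqrt (((vnorm ζ) ^ 2 + 1) * (3 * (vnorm ζ) ^ 2 + 2)) *
          Real.sqrt ((mnorm (A - A')) ^ 2 + (vnorm (b - b')) ^ 2) :=
  statement6_general σ σ''max hσd2 hσ'' ζ
end
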